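/- Let φ be an HML formula (in negation normal form) such that there exist processes p1, p2 with p1 ⊨ φ, p2 ⊨ φ, and p1 not ≲_S p2. Then there exist processes q1, q2 such that q1 ⊨ φ, q2 ⊨ φ, q1 not ≲_S q2, and depth(q_i) ≤ md(φ) + 1 for both i = 1, 2. -/

import Mathlib

/-- Finite, loop-free CCS processes over the action set `Act`:
`p ::= 0 | a.p | p + p`. -/
inductive Proc (Act : Type) : Type
  | nil : Proc Act
  | pre : Act → Proc Act → Proc Act
  | plus : Proc Act → Proc Act → Proc Act

/-- The transition relation: `a.p —a→ p`, and `p₁ + p₂ —a→ p'` iff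
`p₁ —a→ p'` or `p₂ —a→ p'`. -/
inductive Step {Act : Type} : Proc Act → Act → Proc Act → Prop
  | pre (a : Act) (p : Proc Act) : Step (Proc.pre a p) a p
  | plusL : ∀ {p₁ p₂ p' : Proc Act} {a : Act},
      Step p₁ a p' → Step (Proc.plus p₁ p₂) a p'
  | plusR : ∀ {p₁ p₂ p' : Proc Act} {a : Act},
      Step p₂ a p' → Step (Proc.plus p₁ p₂) a p'

/-- HML formulas in negation normal form:
`φ ::= tt | ff | φ∧φ | φ∨φ | ⟨a⟩φ | [a]φ`. -/
inductive HML (Act : Type) : Type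
  | tt : HML Act
  | ff : HML Act
  | conj : HML Act → HML Act → HML Act
  | disj : HML Act → HML Act → HML Act
  | dia : Act → HML Act → HML Act
  | box : Act → HML Act → HML Act

/-- The satisfaction relation `p ⊨ φ`. -/
def Sat {Act : Type} : Proc Act → HML Act → Prop
  | _, HML.tt => True
  | _, HML.ff => False
  | p, HML.conj φ ψ => Sat p φ ∧ Sat p ψ
  | p, HML.disj φ ψ => Sat p φ ∨ Sat p ψ
  | p, HML.dia a φ => ∃ p', Step p a p' ∧ Sat p' φ
  | p, HML.box a φ => ∀ p', Step p a p' → Sat p' φ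

/-- `φ` entails `ψ` iff every process satisfying `φ` satisfies `ψ`. -/
def Entails {Act : Type} (φ ψ : HML Act) : Prop :=
  ∀ p : Proc Act, Sat p φ → Sat p ψ

/-- `R` is a simulation relation. -/
def IsSimulation {Act : Type} (R : Proc Act → Proc Act → Prop) : Prop :=
  ∀ p q, R p q → ∀ a p', Step p a p' → ∃ q', Step q a q' ∧ R p' q'

/-- The simulation preorder `≲_S`: the largest simulation. -/
def Sim {Act : Type} (p q : Proc Act) : Prop :=
  ∃ R, IsSimulation R ∧ R p q

/-- The set `I(p)` of initial actions of a process. -/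
def initials {Act : Type} (p : Proc Act) : Set Act :=
  {a | ∃ p', Step p a p'}

/-- The depth of a process: the length of a longest trace. -/
def depth {Act : Type} : Proc Act → ℕ
  | Proc.nil => 0
  | Proc.pre _ p => depth p + 1
  | Proc.plus p q => max (depth p) (depth q)

/-- The modal depth of a formula: the maximal nesting of modal operators. -/
def md {Act : Type} : HML Act → ℕ
  | HML.tt => 0
  | HML.ff => 0
  | HML.conj φ ψ => max (md φ) (md ψ)
  | HML.disj φ ψ => max (md φ) (md ψ)
  | HML.dia _ φ => md φ + 1
  | HML.box _ φ => md φ + 1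

/-!
Put `n = md φ` and truncate `p₁` at depth `n + 1` and `p₂` at depth `n`. Satisfaction of a formula
of modal depth `≤ n` only depends on the first `n` levels of a process, so both truncations satisfy
`φ`, and each truncation is simulated by its original. Simulation cannot decrease depth, so if the
truncation of `p₁` were simulated by that of `p₂`, then `p₁` would have depth `≤ n`, coincide with
its truncation, and `p₁ ≲_S p₂` would follow by transitivity.
-/

variable {Act : Type}

/-- Cuts every branch after `n` prefixes. Sums are kept even at depth `0`, so that processes of
depth `≤ n` are left unchanged. -/
def prune : ℕ → Proc Act → Proc Act
  | _, Proc.nil => Proc.nil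
  | 0, Proc.pre _ _ => Proc.nil
  | n + 1, Proc.pre a p => Proc.pre a (prune n p)
  | n, Proc.plus p q => Proc.plus (prune n p) (prune n q)

theorem depth_prune (n : ℕ) (p : Proc Act) : depth (prune n p) = min n (depth p) := by
  induction p generalizing n with
  | nil => simp [prune, depth]
  | pre a p ih =>
    cases n with
    | zero => simp [prune, depth]
    | succ n => simp [prune, depth, ih]
  | plus p q ihp ihq =>
    simp only [prune, depth, ihp, ihq]
    omega

theorem prune_eq_self {n : ℕ} {p : Proc Act} (h : depth p ≤ n) : prune n p = p := by
  induction p generalizing n with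
  | nil => simp [prune]
  | pre a p ih =>
    simp only [depth] at h
    cases n with
    | zero => omega
    | succ m => simp [prune, ih (show depth p ≤ m by omega)]
  | plus p q ihp ihq =>
    simp only [depth, max_le_iff] at h
    simp [prune, ihp h.1, ihq h.2]

theorem Step.prune {n : ℕ} {p p' : Proc Act} {a : Act} (h : Step p a p') :
    Step (prune (n + 1) p) a (prune n p') := by
  induction h with
  | pre a p => exact Step.pre a _
  | plusL _ ih => exact Step.plusL ih
  | plusR _ ih => exact Step.plusR ih

theorem exists_step_of_step_prune {n : ℕ} {p x : Proc Act} {a : Act}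
    (h : Step (prune n p) a x) : ∃ m p', n = m + 1 ∧ Step p a p' ∧ x = prune m p' := by
  induction p generalizing x with
  | nil => cases h
  | pre b p _ =>
    cases n with
    | zero => cases h
    | succ m =>
      cases h
      exact ⟨m, p, rfl, Step.pre _ _, rfl⟩
  | plus p q ihp ihq =>
    cases h with
    | plusL h =>
      obtain ⟨m, p', hn, hs, rfl⟩ := ihp h
      exact ⟨m, p', hn, hs.plusL, rfl⟩
    | plusR h =>
      obtain ⟨m, q', hn, hs, rfl⟩ := ihq h
      exact ⟨m, q', hn, hs.plusR, rfl⟩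

theorem step_prune_succ_iff {n : ℕ} {p x : Proc Act} {a : Act} :
    Step (prune (n + 1) p) a x ↔ ∃ p', Step p a p' ∧ x = prune n p' := by
  constructor
  · intro h
    obtain ⟨m, p', hm, hs, rfl⟩ := exists_step_of_step_prune h
    obtain rfl : n = m := by omega
    exact ⟨p', hs, rfl⟩
  · rintro ⟨p', hs, rfl⟩
    exact hs.prune

theorem sat_prune_iff {n : ℕ} {φ : HML Act} (hφ : md φ ≤ n) (p : Proc Act) :
    Sat (prune n p) φ ↔ Sat p φ := by
  induction φ generalizing n p with
  | tt | ff => simp [Sat]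
  | conj φ ψ ihφ ihψ | disj φ ψ ihφ ihψ =>
    simp only [md, max_le_iff] at hφ
    simp only [Sat, ihφ hφ.1, ihψ hφ.2]
  | dia a φ ih | box a φ ih =>
    cases n with
    | zero => simp [md] at hφ
    | succ m =>
      simp [Sat, step_prune_succ_iff, forall_comm (α := Proc Act),
        ih (show md φ ≤ m by simpa [md] using hφ)]

theorem Step.depth_lt {p p' : Proc Act} {a : Act} (h : Step p a p') : depth p' < depth p := by
  induction h with
  | pre => simp [depth]
  | plusL _ ih => simp only [depth]; omega
  | plusR _ ih => simp only [depth]; omega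

theorem exists_step_of_lt_depth {n : ℕ} {p : Proc Act} (h : n < depth p) :
    ∃ a p', Step p a p' ∧ n ≤ depth p' := by
  induction p with
  | nil => simp [depth] at h
  | pre a p _ => exact ⟨a, p, Step.pre a p, by simpa [depth] using h⟩
  | plus p q ihp ihq =>
    simp only [depth, lt_max_iff] at h
    rcases h with h | h
    · obtain ⟨a, p', hs, hd⟩ := ihp h
      exact ⟨a, p', hs.plusL, hd⟩
    · obtain ⟨a, q', hs, hd⟩ := ihq h
      exact ⟨a, q', hs.plusR, hd⟩

namespace Sim

theorem exists_step {p q p' : Proc Act} {a : Act} (h : Sim p q) (hs : Step p a p') :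
    ∃ q', Step q a q' ∧ Sim p' q' := by
  obtain ⟨R, hR, hpq⟩ := h
  obtain ⟨q', hq', hR'⟩ := hR p q hpq a p' hs
  exact ⟨q', hq', R, hR, hR'⟩

theorem trans {p q r : Proc Act} (hpq : Sim p q) (hqr : Sim q r) : Sim p r := by
  refine ⟨fun x z => ∃ y, Sim x y ∧ Sim y z, ?_, q, hpq, hqr⟩
  rintro x z ⟨y, hxy, hyz⟩ a x' hs
  obtain ⟨y', hy', hxy'⟩ := hxy.exists_step hs
  obtain ⟨z', hz', hyz'⟩ := hyz.exists_step hy'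
  exact ⟨z', hz', y', hxy', hyz'⟩

theorem depth_le {p q : Proc Act} (h : Sim p q) : depth p ≤ depth q := by
  suffices ∀ n (p q : Proc Act), Sim p q → n ≤ depth p → n ≤ depth q from this _ p q h le_rfl
  intro n
  induction n with
  | zero => simp
  | succ n ih =>
    intro p q h hn
    obtain ⟨a, p', hs, hp'⟩ := exists_step_of_lt_depth hn
    obtain ⟨q', hq', h'⟩ := h.exists_step hs
    exact (ih p' q' h' hp').trans_lt hq'.depth_lt

end Sim

theorem prune_sim (n : ℕ) (p : Proc Act) : Sim (prune n p) p := by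
  refine ⟨fun x y => ∃ m, x = prune m y, ?_, n, rfl⟩
  rintro x y ⟨m, rfl⟩ a x' hs
  obtain ⟨k, y', -, hs', rfl⟩ := exists_step_of_step_prune hs
  exact ⟨y', hs', k, rfl⟩

theorem small_witnesses_of_not_sim_general {Act : Type}
    (φ : HML Act) (p₁ p₂ : Proc Act) (h₁ : Sat p₁ φ) (h₂ : Sat p₂ φ)
    (hns : ¬ Sim p₁ p₂) :
    ∃ q₁ q₂ : Proc Act, Sat q₁ φ ∧ Sat q₂ φ ∧ ¬ Sim q₁ q₂ ∧
      depth q₁ ≤ md φ + 1 ∧ depth q₂ ≤ md φ + 1 := by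
  set n := md φ
  refine ⟨prune (n + 1) p₁, prune n p₂, (sat_prune_iff n.le_succ p₁).2 h₁,
    (sat_prune_iff le_rfl p₂).2 h₂, fun hsim => ?_, ?_, ?_⟩
  · have hdepth : depth p₁ ≤ n + 1 := by
      have hle := hsim.depth_le
      rw [depth_prune, depth_prune] at hle
      omega
    rw [prune_eq_self hdepth] at hsim
    exact hns (hsim.trans (prune_sim n p₂))
  all_goals simp [depth_prune]

/-- If there are processes `p₁ ⊨ φ`, `p₂ ⊨ φ` with `p₁ ⋦_S p₂`, then there are
`q₁ ⊨ φ`, `q₂ ⊨ φ` with `q₁ ⋦_S q₂` and `depth(q_i) ≤ md(φ) + 1` for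
`i = 1, 2`. -/
theorem small_witnesses_of_not_sim {Act : Type} [Fintype Act] [Nonempty Act]
    (φ : HML Act) (p₁ p₂ : Proc Act) (h₁ : Sat p₁ φ) (h₂ : Sat p₂ φ)
    (hns : ¬ Sim p₁ p₂) :
    ∃ q₁ q₂ : Proc Act, Sat q₁ φ ∧ Sat q₂ φ ∧ ¬ Sim q₁ q₂ ∧
      depth q₁ ≤ md φ + 1 ∧ depth q₂ ≤ md φ + 1 :=
  small_witnesses_of_not_sim_general φ p₁ p₂ h₁ h₂ hns
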